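/- arXiv:dg-ga/9610003 — 3 statements merged into one kernel-verified Lean document; each statement's English description precedes it below -/
import Mathlib

section
/- Let M ∈ ℕ, 0 < ε < 1/3, and let (d_i)_{i≥0} be positive real numbers with d_{i+1} < d_i/(2M) for all i. Let G be a group with elements α_i and a metric d on G such that for all 1 ≤ k, k' ≤ M with relevant powers in a fixed neighborhood, d(α_i^k, α_i^{k'}) ≥ (|k − k'| − ε)·d_i where d_i = d(α_i, e) > 0, and d(α_i^k, e) ≤ M·d_i. Then the M^n products γ_{ε₁…ε_n} = α_{n₀+1}^{ε₁} ⋯ α_{n₀+n}^{ε_n} with ε_i ∈ {0,…,M−1} are pairwise distinct. -/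
/-- Let `M ∈ ℕ`, `0 < ε < 1/3`, and `(α_i)` elements of a group `G` with a left-invariant
metric whose displacements `d_i = d(α_i, e) > 0` satisfy `d_{i+1} < d_i/(2M)`, and suppose
`d(α_i^k, α_i^{k'}) ≥ (|k − k'| − ε) d_i` for `1 ≤ k, k' ≤ M` and `d(α_i^k, e) ≤ M d_i` for
`k ≤ M`. Then the `M^n` products `γ_{ε₁…ε_n} = α_{n₀+1}^{ε₁} ⋯ α_{n₀+n}^{ε_n}` with
`ε_i ∈ {0, …, M−1}` are pairwise distinct. -/
theorem products_pairwise_distinct {G : Type*} [Group G] [MetricSpace G]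
    (hleft : ∀ g x y : G, dist (g * x) (g * y) = dist x y)
    (M : ℕ) (hM : 1 ≤ M) (ε : ℝ) (hε0 : 0 < ε) (hε : ε < 1 / 3)
    (α : ℕ → G) (hd0 : ∀ i : ℕ, 0 < dist (α i) 1)
    (hdec : ∀ i : ℕ, dist (α (i + 1)) 1 < dist (α i) 1 / (2 * M))
    (hlow : ∀ i : ℕ, ∀ k k' : ℕ, 1 ≤ k → k ≤ M → 1 ≤ k' → k' ≤ M →
      (|(k : ℝ) - (k' : ℝ)| - ε) * dist (α i) 1 ≤ dist (α i ^ k) (α i ^ k'))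
    (hup : ∀ i : ℕ, ∀ k : ℕ, k ≤ M → dist (α i ^ k) 1 ≤ (M : ℝ) * dist (α i) 1)
    (n₀ n : ℕ) :
    Function.Injective (fun e : Fin n → Fin M =>
      (List.ofFn fun i : Fin n => α (n₀ + 1 + (i : ℕ)) ^ ((e i : ℕ))).prod) := by
  have hM1 : (1 : ℝ) ≤ M := by exact_mod_cast hM
  -- subadditivity of the "norm" dist · 1
  have hsub : ∀ a b : G, dist (a * b) 1 ≤ dist a 1 + dist b 1 := by
    intro a b
    calc dist (a * b) 1 ≤ dist (a * b) a + dist a 1 := dist_triangle _ _ _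
      _ = dist b 1 + dist a 1 := by
          have h := hleft a b 1
          rw [mul_one] at h
          rw [h]
      _ = dist a 1 + dist b 1 := add_comm _ _
  have hpow : ∀ (a : G) (k : ℕ), dist (a ^ k) 1 ≤ (k : ℝ) * dist a 1 := by
    intro a k
    induction k with
    | zero => simp
    | succ k ih =>
      calc dist (a ^ (k + 1)) 1 = dist (a ^ k * a) 1 := by rw [pow_succ]
        _ ≤ dist (a ^ k) 1 + dist a 1 := hsub _ _
        _ ≤ (k : ℝ) * dist a 1 + dist a 1 := by linarith
        _ = ((k + 1 : ℕ) : ℝ) * dist a 1 := by push_cast; ring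
  -- lower bound for small powers
  have hE : ∀ i m : ℕ, 1 ≤ m → m < M → dist (α i) 1 ≤ dist (α i ^ m) 1 := by
    intro i m h1 h2
    rcases eq_or_lt_of_le h1 with h | h
    · rw [← h, pow_one]
    · have h2m : (2 : ℝ) ≤ (m : ℝ) := by exact_mod_cast h
      have hl := hlow i (m + 1) 1 (by omega) (by omega) le_rfl hM
      have habs : |((m + 1 : ℕ) : ℝ) - ((1 : ℕ) : ℝ)| = (m : ℝ) := by
        push_cast
        rw [show ((m : ℝ) + 1) - 1 = (m : ℝ) by ring]
        exact abs_of_nonneg (by positivity)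
      rw [habs] at hl
      have hd' : dist (α i ^ (m + 1)) (α i ^ 1) = dist (α i ^ m) 1 := by
        have h := hleft (α i) (α i ^ m) 1
        rw [mul_one] at h
        rw [pow_one, pow_succ', h]
      rw [hd'] at hl
      have : (1 : ℝ) ≤ (m : ℝ) - ε := by linarith
      calc dist (α i) 1 ≤ ((m : ℝ) - ε) * dist (α i) 1 :=
            le_mul_of_one_le_left (hd0 i).le this
        _ ≤ dist (α i ^ m) 1 := hl
  -- geometric bound
  have geom : ∀ (n' i : ℕ),
      2 * (∑ j : Fin n', ((M : ℝ) - 1) * dist (α (i + 1 + (j : ℕ))) 1) < dist (α i) 1 := by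
    intro n'
    induction n' with
    | zero => intro i; simpa using hd0 i
    | succ n' ih =>
      intro i
      have h2M : (0 : ℝ) < 2 * M := by linarith
      have hlt : 2 * (M : ℝ) * dist (α (i + 1)) 1 < dist (α i) 1 := by
        have hd := hdec i
        rw [lt_div_iff₀ h2M] at hd
        linarith
      have ih' := ih (i + 1)
      rw [Fin.sum_univ_succ]
      have hre : (∑ j : Fin n', ((M : ℝ) - 1) * dist (α (i + 1 + ((j.succ : Fin (n' + 1)) : ℕ))) 1)
          = ∑ j : Fin n', ((M : ℝ) - 1) * dist (α ((i + 1) + 1 + (j : ℕ))) 1 := by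
        refine Finset.sum_congr rfl fun j _ => ?_
        have hx : i + 1 + ((j.succ : Fin (n' + 1)) : ℕ) = (i + 1) + 1 + (j : ℕ) := by
          rw [Fin.val_succ]; omega
        rw [hx]
      rw [hre]
      simp only [Fin.val_zero, Nat.add_zero]
      have hdpos := hd0 (i + 1)
      linarith
  -- tail bound
  have htail : ∀ (n' i : ℕ) (b : Fin n' → ℕ), (∀ j, b j < M) →
      dist ((List.ofFn fun j : Fin n' => α (i + 1 + (j : ℕ)) ^ (b j)).prod) 1
        ≤ ∑ j : Fin n', ((M : ℝ) - 1) * dist (α (i + 1 + (j : ℕ))) 1 := by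
    intro n'
    induction n' with
    | zero => intro i b hb; simp
    | succ n' ih =>
      intro i b hb
      rw [List.ofFn_succ, List.prod_cons, Fin.sum_univ_succ]
      refine le_trans (hsub _ _) (add_le_add ?_ ?_)
      · refine le_trans (hpow _ _) ?_
        have hb0 : ((b 0 : ℝ)) + 1 ≤ (M : ℝ) := by exact_mod_cast hb 0
        have := (hd0 (i + 1 + ((0 : Fin (n' + 1)) : ℕ))).le
        nlinarith
      · have hfun : (fun j : Fin n' => α (i + 1 + ((j.succ : Fin (n' + 1)) : ℕ)) ^ (b j.succ))
            = fun j : Fin n' => α ((i + 1) + 1 + (j : ℕ)) ^ ((fun j : Fin n' => b j.succ) j) := by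
          funext j
          have hx : i + 1 + ((j.succ : Fin (n' + 1)) : ℕ) = (i + 1) + 1 + (j : ℕ) := by
            rw [Fin.val_succ]; omega
          rw [hx]
        rw [hfun]
        refine le_trans (ih (i + 1) (fun j => b j.succ) (fun j => hb j.succ)) ?_
        refine le_of_eq (Finset.sum_congr rfl fun j _ => ?_)
        have hx : i + 1 + ((j.succ : Fin (n' + 1)) : ℕ) = (i + 1) + 1 + (j : ℕ) := by
          rw [Fin.val_succ]; omega
        rw [hx]
  -- the contradiction step
  have hstep : ∀ (i k k' : ℕ), k' < k → k < M → ∀ T T' : G,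
      dist T 1 + dist T' 1 < dist (α i) 1 → α i ^ k * T = α i ^ k' * T' → False := by
    intro i k k' hkk hkM T T' hTT heq
    have hk : k' + (k - k') = k := by omega
    have heq' : α i ^ (k - k') * T = T' := by
      have h := mul_left_cancel (a := α i ^ k') (b := α i ^ (k - k') * T) (c := T') ?_
      · exact h
      · rw [← mul_assoc, ← pow_add, hk, heq]
    have h1 : dist (α i) 1 ≤ dist (α i ^ (k - k')) 1 := hE i (k - k') (by omega) (by omega)
    have h2 : dist (α i ^ (k - k')) 1 ≤ dist T 1 + dist T' 1 := by
      calc dist (α i ^ (k - k')) 1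
          ≤ dist (α i ^ (k - k')) (α i ^ (k - k') * T) + dist (α i ^ (k - k') * T) 1 :=
            dist_triangle _ _ _
        _ = dist 1 T + dist T' 1 := by
            have h := hleft (α i ^ (k - k')) 1 T
            rw [mul_one] at h
            rw [h, heq']
        _ = dist T 1 + dist T' 1 := by rw [dist_comm (1 : G) T]
    linarith
  -- main induction
  have key : ∀ (n' i : ℕ) (e e' : Fin n' → Fin M),
      (List.ofFn fun j : Fin n' => α (i + 1 + (j : ℕ)) ^ ((e j : ℕ))).prod
        = (List.ofFn fun j : Fin n' => α (i + 1 + (j : ℕ)) ^ ((e' j : ℕ))).prod → e = e' := by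
    intro n'
    induction n' with
    | zero => intro i e e' _; funext j; exact j.elim0
    | succ n' ih =>
      intro i e e' h
      rw [List.ofFn_succ, List.ofFn_succ, List.prod_cons, List.prod_cons] at h
      have hfun : ∀ f : Fin (n' + 1) → Fin M,
          (fun j : Fin n' => α (i + 1 + ((j.succ : Fin (n' + 1)) : ℕ)) ^ ((f j.succ : ℕ)))
            = fun j : Fin n' => α ((i + 1) + 1 + (j : ℕ)) ^ (((f ∘ Fin.succ) j : ℕ)) := by
        intro f
        funext j
        have hx : i + 1 + ((j.succ : Fin (n' + 1)) : ℕ) = (i + 1) + 1 + (j : ℕ) := by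
          rw [Fin.val_succ]; omega
        rw [hx]
        rfl
      rw [hfun e, hfun e'] at h
      simp only [Fin.val_zero, Nat.add_zero] at h
      set T : G := (List.ofFn fun j : Fin n' =>
        α ((i + 1) + 1 + (j : ℕ)) ^ (((e ∘ Fin.succ) j : ℕ))).prod with hT
      set T' : G := (List.ofFn fun j : Fin n' =>
        α ((i + 1) + 1 + (j : ℕ)) ^ (((e' ∘ Fin.succ) j : ℕ))).prod with hT'
      have hTb : dist T 1 ≤ ∑ j : Fin n', ((M : ℝ) - 1) * dist (α ((i + 1) + 1 + (j : ℕ))) 1 :=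
        htail n' (i + 1) (fun j => ((e ∘ Fin.succ) j : ℕ)) (fun j => (e j.succ).isLt)
      have hT'b : dist T' 1 ≤ ∑ j : Fin n', ((M : ℝ) - 1) * dist (α ((i + 1) + 1 + (j : ℕ))) 1 :=
        htail n' (i + 1) (fun j => ((e' ∘ Fin.succ) j : ℕ)) (fun j => (e' j.succ).isLt)
      have hB := geom n' (i + 1)
      have hsum : dist T 1 + dist T' 1 < dist (α (i + 1)) 1 := by linarith
      rcases lt_trichotomy ((e 0 : ℕ)) ((e' 0 : ℕ)) with hlt | heq0 | hgt
      · exact absurd h.symm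
          (fun hh => hstep (i + 1) (e' 0 : ℕ) (e 0 : ℕ) hlt (e' 0).isLt T' T (by linarith) hh)
      · have h00 : e 0 = e' 0 := Fin.ext heq0
        rw [h00] at h
        have htails : (e ∘ Fin.succ) = (e' ∘ Fin.succ) := by
          refine ih (i + 1) _ _ ?_
          exact mul_left_cancel h
        funext j
        refine Fin.cases ?_ ?_ j
        · exact h00
        · intro j'
          exact congrFun htails j'
      · exact absurd h
          (fun hh => hstep (i + 1) (e 0 : ℕ) (e' 0 : ℕ) hgt (e 0).isLt T T' hsum hh)
  intro e e' h
  exact key n n₀ e e' h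
end

section
/- Let Γ be a finitely generated group with word norm |·|_Γ, and suppose α, γ ∈ Γ are such that for each n the 2^n elements γ_{ε₀…ε_{n−1}} = α^{ε₀}(γαγ⁻¹)^{ε₁}⋯(γ^{n−1}αγ^{1−n})^{ε_{n−1}}, ε_i ∈ {0,1}, are pairwise distinct and belong to a fixed subset U ⊆ Γ. Then the function f(k) = #{g ∈ U : |g|_Γ < k} grows superpolynomially: for every d > 0, limsup_{k→∞} f(k)/k^d = ∞. -/
/-- The word norm with respect to a generating set `S`. -/
noncomputable def wordNorm {Γ : Type*} [Group Γ] (S : Set Γ) (γ : Γ) : ℕ :=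
  sInf {n : ℕ | ∃ l : List Γ, l.length = n ∧ (∀ x ∈ l, x ∈ S ∨ x⁻¹ ∈ S) ∧ l.prod = γ}

namespace WordNormAux

open Filter

variable {Γ : Type*} [Group Γ] {S : Set Γ}

lemma exists_word (hSgen : Subgroup.closure S = ⊤) (g : Γ) :
    ∃ l : List Γ, (∀ x ∈ l, x ∈ S ∨ x⁻¹ ∈ S) ∧ l.prod = g := by
  have hg : g ∈ Subgroup.closure S := hSgen ▸ Subgroup.mem_top g
  induction hg using Subgroup.closure_induction with
  | mem x hx => exact ⟨[x], by simp [hx], by simp⟩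
  | one => exact ⟨[], by simp, by simp⟩
  | mul x y _ _ hx hy =>
      obtain ⟨l1, h1, p1⟩ := hx
      obtain ⟨l2, h2, p2⟩ := hy
      refine ⟨l1 ++ l2, ?_, by simp [p1, p2]⟩
      intro z hz
      rcases List.mem_append.mp hz with h | h
      · exact h1 z h
      · exact h2 z h
  | inv x _ hx =>
      obtain ⟨l, h1, p1⟩ := hx
      refine ⟨(l.map fun x => x⁻¹).reverse, ?_, ?_⟩
      · intro z hz
        simp only [List.mem_reverse, List.mem_map] at hz
        obtain ⟨w, hw, rfl⟩ := hz
        rcases h1 w hw with h | h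
        · exact Or.inr (by simpa using h)
        · exact Or.inl h
      · rw [← List.prod_inv_reverse, p1]

lemma wordNorm_le_length {g : Γ} {l : List Γ} (hl : ∀ x ∈ l, x ∈ S ∨ x⁻¹ ∈ S)
    (hp : l.prod = g) : wordNorm S g ≤ l.length :=
  Nat.sInf_le ⟨l, rfl, hl, hp⟩

lemma exists_word_length (hSgen : Subgroup.closure S = ⊤) (g : Γ) :
    ∃ l : List Γ, l.length = wordNorm S g ∧ (∀ x ∈ l, x ∈ S ∨ x⁻¹ ∈ S) ∧ l.prod = g := by
  have hne : {n : ℕ | ∃ l : List Γ, l.length = n ∧ (∀ x ∈ l, x ∈ S ∨ x⁻¹ ∈ S) ∧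
      l.prod = g}.Nonempty := by
    obtain ⟨l, h1, h2⟩ := exists_word hSgen g
    exact ⟨l.length, l, rfl, h1, h2⟩
  exact Nat.sInf_mem hne

lemma wordNorm_one : wordNorm S (1 : Γ) = 0 :=
  Nat.le_zero.mp (wordNorm_le_length (l := []) (by simp) (by simp))

lemma wordNorm_mul_le (hSgen : Subgroup.closure S = ⊤) (a b : Γ) :
    wordNorm S (a * b) ≤ wordNorm S a + wordNorm S b := by
  obtain ⟨la, hla, ha, pa⟩ := exists_word_length hSgen a
  obtain ⟨lb, hlb, hb, pb⟩ := exists_word_length hSgen b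
  have := wordNorm_le_length (g := a * b) (l := la ++ lb)
    (by intro z hz; rcases List.mem_append.mp hz with h | h
        exacts [ha z h, hb z h])
    (by simp [pa, pb])
  simpa [hla, hlb] using this

lemma wordNorm_inv_le (hSgen : Subgroup.closure S = ⊤) (a : Γ) :
    wordNorm S a⁻¹ ≤ wordNorm S a := by
  obtain ⟨l, hl, h1, p1⟩ := exists_word_length hSgen a
  have := wordNorm_le_length (g := a⁻¹) (l := (l.map fun x => x⁻¹).reverse)
    (by intro z hz
        simp only [List.mem_reverse, List.mem_map] at hz
        obtain ⟨w, hw, rfl⟩ := hz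
        rcases h1 w hw with h | h
        · exact Or.inr (by simpa using h)
        · exact Or.inl h)
    (by rw [← List.prod_inv_reverse, p1])
  simpa [hl] using this

lemma wordNorm_pow_le (hSgen : Subgroup.closure S = ⊤) (a : Γ) (n : ℕ) :
    wordNorm S (a ^ n) ≤ n * wordNorm S a := by
  induction n with
  | zero => simp [wordNorm_one]
  | succ n ih =>
      calc wordNorm S (a ^ (n + 1)) = wordNorm S (a ^ n * a) := by rw [pow_succ]
        _ ≤ wordNorm S (a ^ n) + wordNorm S a := wordNorm_mul_le hSgen _ _
        _ ≤ n * wordNorm S a + wordNorm S a := by omega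
        _ = (n + 1) * wordNorm S a := by ring

lemma wordNorm_listProd_le (hSgen : Subgroup.closure S = ⊤) (l : List Γ) :
    wordNorm S l.prod ≤ (l.map (wordNorm S)).sum := by
  induction l with
  | nil => simp [wordNorm_one]
  | cons a l ih =>
      simp only [List.prod_cons, List.map_cons, List.sum_cons]
      exact le_trans (wordNorm_mul_le hSgen _ _) (by omega)

lemma finite_ball (hSfin : S.Finite) (hSgen : Subgroup.closure S = ⊤) (k : ℕ) :
    {g : Γ | wordNorm S g < k}.Finite := by
  have hT : (S ∪ S⁻¹ : Set Γ).Finite := hSfin.union hSfin.inv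
  have : Finite ↥(S ∪ S⁻¹ : Set Γ) := hT
  apply Set.Finite.subset
    ((List.finite_length_lt (↥(S ∪ S⁻¹ : Set Γ)) k).image
      (fun l : List ↥(S ∪ S⁻¹ : Set Γ) => (l.map Subtype.val).prod))
  intro g hg
  obtain ⟨l, hlen, hmem, hp⟩ := exists_word_length hSgen g
  refine ⟨l.attach.map (fun x => ⟨x.1, ?_⟩), ?_, ?_⟩
  · rcases hmem x.1 x.2 with h | h
    · exact Or.inl h
    · exact Or.inr (Set.mem_inv.mpr (by simpa using h))
  · simpa [hlen] using hg
  · simp only [List.map_map]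
    have : (l.attach.map fun x => ((⟨x.1, by
        rcases hmem x.1 x.2 with h | h
        · exact Or.inl h
        · exact Or.inr (Set.mem_inv.mpr (by simpa using h))⟩ :
          ↥(S ∪ S⁻¹ : Set Γ)) : Γ)) = l := by
      simp
    simp only [Function.comp_def]
    rw [this] at *
    exact hp

end WordNormAux

/-- Let `Γ` be a finitely generated group with word norm, and `α, γ ∈ Γ` such that for each
`n` the `2^n` elements `α^{ε₀} (γαγ⁻¹)^{ε₁} ⋯ (γ^{n−1}αγ^{1−n})^{ε_{n−1}}`, `ε_i ∈ {0,1}`,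
are pairwise distinct and lie in a fixed subset `U ⊆ Γ`. Then
`f(k) = #{g ∈ U : |g|_Γ < k}` grows superpolynomially. -/
theorem superpolynomial_growth_of_distinct_products {Γ : Type*} [Group Γ]
    (S : Set Γ) (hSfin : S.Finite) (hSgen : Subgroup.closure S = ⊤)
    (α γ : Γ) (U : Set Γ)
    (hdistinct : ∀ n : ℕ, Function.Injective (fun e : Fin n → Bool =>
      (List.ofFn fun i : Fin n =>
        if e i then γ ^ (i : ℕ) * α * (γ ^ (i : ℕ))⁻¹ else 1).prod))
    (hmem : ∀ n : ℕ, ∀ e : Fin n → Bool,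
      (List.ofFn fun i : Fin n =>
        if e i then γ ^ (i : ℕ) * α * (γ ^ (i : ℕ))⁻¹ else 1).prod ∈ U) :
    ∀ d : ℝ, 0 < d →
      Filter.limsup (fun k : ℕ =>
        ((({g ∈ U | wordNorm S g < k}.ncard : ℝ) / (k : ℝ) ^ d : ℝ) : EReal))
        Filter.atTop = ⊤ := by
  classical
  open WordNormAux Filter in
  intro d hd
  set A := wordNorm S α with hA
  set G := wordNorm S γ with hG
  set B : ℕ := 2 * G + A + 1 with hB
  set kf : ℕ → ℕ := fun n => B * n ^ 2 + 1 with hkf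
  -- word norm bound for the products
  have hnorm : ∀ n : ℕ, ∀ e : Fin n → Bool,
      wordNorm S (List.ofFn fun i : Fin n =>
        if e i then γ ^ (i : ℕ) * α * (γ ^ (i : ℕ))⁻¹ else 1).prod < kf n := by
    intro n e
    have h1 : ∀ i : Fin n, wordNorm S (if e i then γ ^ (i : ℕ) * α * (γ ^ (i : ℕ))⁻¹ else 1)
        ≤ 2 * n * G + A := by
      intro i
      by_cases h : e i = true
      · rw [if_pos h]
        have b1 : wordNorm S (γ ^ (i : ℕ) * α) ≤ wordNorm S (γ ^ (i : ℕ)) + A :=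
          wordNorm_mul_le hSgen _ _
        have b2 : wordNorm S (γ ^ (i : ℕ) * α * (γ ^ (i : ℕ))⁻¹)
            ≤ wordNorm S (γ ^ (i : ℕ) * α) + wordNorm S ((γ ^ (i : ℕ))⁻¹) :=
          wordNorm_mul_le hSgen _ _
        have b3 : wordNorm S ((γ ^ (i : ℕ))⁻¹) ≤ (i : ℕ) * G :=
          le_trans (wordNorm_inv_le hSgen _) (wordNorm_pow_le hSgen _ _)
        have b4 : wordNorm S (γ ^ (i : ℕ)) ≤ (i : ℕ) * G := wordNorm_pow_le hSgen _ _
        have hi : (i : ℕ) ≤ n := le_of_lt i.2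
        nlinarith
      · rw [if_neg h, wordNorm_one]
        exact Nat.zero_le _
    calc wordNorm S (List.ofFn fun i : Fin n =>
          if e i then γ ^ (i : ℕ) * α * (γ ^ (i : ℕ))⁻¹ else 1).prod
        ≤ ((List.ofFn fun i : Fin n =>
            if e i then γ ^ (i : ℕ) * α * (γ ^ (i : ℕ))⁻¹ else 1).map (wordNorm S)).sum :=
          wordNorm_listProd_le hSgen _
      _ = ∑ i : Fin n, wordNorm S (if e i then γ ^ (i : ℕ) * α * (γ ^ (i : ℕ))⁻¹ else 1) := by
          rw [List.map_ofFn, List.sum_ofFn]; rfl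
      _ ≤ ∑ _i : Fin n, (2 * n * G + A) := Finset.sum_le_sum (fun i _ => h1 i)
      _ = n * (2 * n * G + A) := by simp [Finset.sum_const, mul_comm]
      _ < kf n := by
          simp only [hkf, hB]
          have h5 : n * A ≤ n ^ 2 * A :=
            Nat.mul_le_mul_right A (Nat.le_self_pow two_ne_zero n)
          nlinarith [h5]
  -- cardinality lower bound
  have hcard : ∀ n : ℕ, 2 ^ n ≤ {g ∈ U | wordNorm S g < kf n}.ncard := by
    intro n
    set F : (Fin n → Bool) → Γ := fun e =>
      (List.ofFn fun i : Fin n =>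
        if e i then γ ^ (i : ℕ) * α * (γ ^ (i : ℕ))⁻¹ else 1).prod with hF
    have hsub : Set.range F ⊆ {g ∈ U | wordNorm S g < kf n} := by
      rintro _ ⟨e, rfl⟩
      exact ⟨hmem n e, hnorm n e⟩
    have hfin : {g ∈ U | wordNorm S g < kf n}.Finite :=
      (finite_ball hSfin hSgen (kf n)).subset (fun g hg => hg.2)
    have h1 : (Set.range F).ncard = 2 ^ n := by
      rw [← Nat.card_coe_set_eq, Nat.card_range_of_injective (hdistinct n)]
      simp [Nat.card_eq_fintype_card]
    calc (2 : ℕ) ^ n = (Set.range F).ncard := h1.symm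
      _ ≤ _ := Set.ncard_le_ncard hsub hfin
  -- kf tends to atTop
  have hkt : Filter.Tendsto kf Filter.atTop Filter.atTop := by
    apply Filter.tendsto_atTop_mono (f := id) _ Filter.tendsto_id
    intro n
    simp only [hkf, id]
    have h1 : n ≤ n ^ 2 := Nat.le_self_pow two_ne_zero n
    have h2 : 1 * n ^ 2 ≤ B * n ^ 2 := Nat.mul_le_mul_right _ (by omega)
    calc n ≤ n ^ 2 := h1
      _ = 1 * n ^ 2 := (one_mul _).symm
      _ ≤ B * n ^ 2 := h2
      _ ≤ B * n ^ 2 + 1 := Nat.le_succ _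
  rw [EReal.eq_top_iff_forall_lt]
  intro y
  have key : ((y + 1 : ℝ) : EReal) ≤ Filter.limsup (fun k : ℕ =>
      ((({g ∈ U | wordNorm S g < k}.ncard : ℝ) / (k : ℝ) ^ d : ℝ) : EReal)) Filter.atTop := by
    apply Filter.le_limsup_of_frequently_le'
    set M : ℝ := max (y + 1) 1 with hM
    have hM1 : (1 : ℝ) ≤ M := le_max_right _ _
    have hM0 : (0 : ℝ) < M := lt_of_lt_of_le one_pos hM1
    set m : ℕ := ⌈d⌉₊ with hm
    have hdm : d ≤ (m : ℝ) := Nat.le_ceil d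
    set D : ℝ := M * ((B : ℝ) + 1) ^ m with hD
    have hD0 : (0 : ℝ) < D := by positivity
    -- eventual bound along n
    have hev : ∀ᶠ n : ℕ in Filter.atTop,
        (y + 1 : ℝ) ≤ ({g ∈ U | wordNorm S g < kf n}.ncard : ℝ) / ((kf n : ℝ)) ^ d := by
      have htend : Filter.Tendsto
          (fun n : ℕ => ((n + 1 : ℕ) : ℝ) ^ (2 * m) / 2 ^ (n + 1)) Filter.atTop (nhds 0) := by
        exact (tendsto_pow_const_div_const_pow_of_one_lt (2 * m)
          (by norm_num : (1:ℝ) < 2)).comp (Filter.tendsto_add_atTop_nat 1)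
      have hsmall : ∀ᶠ n : ℕ in Filter.atTop,
          ((n + 1 : ℕ) : ℝ) ^ (2 * m) / 2 ^ (n + 1) < 1 / (2 * D) := by
        have := htend.eventually (eventually_lt_nhds (by positivity : (0:ℝ) < 1 / (2 * D)))
        simpa using this
      filter_upwards [hsmall] with n hn
      have hkpos : (0 : ℝ) < (kf n : ℝ) := by
        have : 1 ≤ kf n := by simp [hkf]
        exact_mod_cast lt_of_lt_of_le one_pos this
      have hrpos : (0 : ℝ) < ((kf n : ℝ)) ^ d := Real.rpow_pos_of_pos hkpos d
      -- bound (kf n)^d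
      have hkb : (kf n : ℝ) ≤ (((B : ℝ) + 1) * ((n + 1 : ℕ) : ℝ) ^ 2) := by
        push_cast [hkf]
        nlinarith [Nat.cast_nonneg (α := ℝ) B, Nat.cast_nonneg (α := ℝ) n]
      have hbase1 : (1 : ℝ) ≤ (((B : ℝ) + 1) * ((n + 1 : ℕ) : ℝ) ^ 2) := by
        have h1 : (1 : ℝ) ≤ (B : ℝ) + 1 := by
          have := Nat.cast_nonneg (α := ℝ) B; linarith
        have h2 : (1 : ℝ) ≤ ((n + 1 : ℕ) : ℝ) ^ 2 := by
          have : (1 : ℝ) ≤ ((n + 1 : ℕ) : ℝ) := by exact_mod_cast Nat.succ_le_succ (Nat.zero_le n)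
          nlinarith
        nlinarith
      have hrb : ((kf n : ℝ)) ^ d ≤ ((((B : ℝ) + 1) * ((n + 1 : ℕ) : ℝ) ^ 2)) ^ (m : ℕ) := by
        calc ((kf n : ℝ)) ^ d ≤ ((((B : ℝ) + 1) * ((n + 1 : ℕ) : ℝ) ^ 2)) ^ d :=
              Real.rpow_le_rpow (le_of_lt hkpos) hkb (le_of_lt hd)
          _ ≤ ((((B : ℝ) + 1) * ((n + 1 : ℕ) : ℝ) ^ 2)) ^ ((m : ℕ) : ℝ) :=
              Real.rpow_le_rpow_of_exponent_le hbase1 hdm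
          _ = _ := Real.rpow_natCast _ m
      have hexp : ((((B : ℝ) + 1) * ((n + 1 : ℕ) : ℝ) ^ 2)) ^ (m : ℕ)
          = ((B : ℝ) + 1) ^ m * ((n + 1 : ℕ) : ℝ) ^ (2 * m) := by
        rw [mul_pow, ← pow_mul]
      -- main numeric estimate : M * (kf n)^d ≤ 2^n
      have hnum : M * ((kf n : ℝ)) ^ d ≤ 2 ^ n := by
        have h1 : ((n + 1 : ℕ) : ℝ) ^ (2 * m) < (1 / (2 * D)) * 2 ^ (n + 1) := by
          rw [div_lt_iff₀ (by positivity : (0:ℝ) < 2 ^ (n + 1))] at hn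
          exact hn
        have h2 : M * ((kf n : ℝ)) ^ d ≤ D * ((n + 1 : ℕ) : ℝ) ^ (2 * m) := by
          rw [hD]
          calc M * ((kf n : ℝ)) ^ d
              ≤ M * (((B : ℝ) + 1) ^ m * ((n + 1 : ℕ) : ℝ) ^ (2 * m)) := by
                apply mul_le_mul_of_nonneg_left _ (le_of_lt hM0)
                rw [← hexp]; exact hrb
            _ = M * ((B : ℝ) + 1) ^ m * ((n + 1 : ℕ) : ℝ) ^ (2 * m) := by ring
        have h3 : D * ((n + 1 : ℕ) : ℝ) ^ (2 * m) < D * ((1 / (2 * D)) * 2 ^ (n + 1)) :=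
          mul_lt_mul_of_pos_left h1 hD0
        have h4 : D * ((1 / (2 * D)) * 2 ^ (n + 1)) = 2 ^ n := by
          field_simp
          ring
        linarith
      -- conclude
      have hcn : (2 : ℝ) ^ n ≤ ({g ∈ U | wordNorm S g < kf n}.ncard : ℝ) := by
        exact_mod_cast hcard n
      have : M ≤ ({g ∈ U | wordNorm S g < kf n}.ncard : ℝ) / ((kf n : ℝ)) ^ d := by
        rw [le_div_iff₀ hrpos]
        calc M * ((kf n : ℝ)) ^ d ≤ 2 ^ n := hnum
          _ ≤ _ := hcn
      exact le_trans (le_max_left _ _) this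
    -- transport along kf
    have : ∃ᶠ k : ℕ in Filter.atTop, (y + 1 : ℝ) ≤
        ({g ∈ U | wordNorm S g < k}.ncard : ℝ) / ((k : ℝ)) ^ d :=
      hkt.frequently hev.frequently
    apply this.mono
    intro k hk
    exact_mod_cast EReal.coe_le_coe_iff.mpr hk
  calc (y : EReal) < ((y + 1 : ℝ) : EReal) := by exact_mod_cast lt_add_one y
    _ ≤ _ := key
end

section
/- Let G be a topological group acting continuously by isometries on a proper metric space X, and let A ⊆ G be a subgroup such that the displacement function δ_a attains its infimum for some a ∈ A, a ≠ identity. If (p_n) is a sequence in X with δ_a(p_n) → inf δ_a and (g_n) are isometries with g_n·p_n = p₀ for a fixed basepoint p₀, then the conjugates g_n a g_n⁻¹ have a subsequence converging to an isometry ā with displacement function attaining its infimum (at p₀), and inf δ_ā = inf δ_a. -/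
open Filter Metric TopologicalSpace

/-- Let a topological group `G` act continuously by isometries on a proper metric space `X`,
`A ≤ G` a subgroup containing `a ≠ 1` whose displacement function attains its infimum. If
`δ_a(p_n) → inf δ_a` and `g_n` are isometries with `g_n p_n = p₀`, then the conjugates
`g_n a g_n⁻¹` subconverge (pointwise) to an isometry `ā` whose displacement attains its
infimum at `p₀`, and `inf δ_ā = inf δ_a`. -/
theorem conjugates_subconverge_to_semisimple {G X : Type*} [Group G] [TopologicalSpace G]
    [MetricSpace X] [ProperSpace X] [MulAction G X]
    (hcont : Continuous fun p : G × X => p.1 • p.2)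
    (hiso : ∀ g : G, Isometry fun x : X => g • x)
    (A : Subgroup G) (a : G) (haA : a ∈ A) (hane : a ≠ 1)
    (hattain : ∃ x : X, dist (a • x) x = ⨅ y : X, dist (a • y) y)
    (p : ℕ → X) (p₀ : X)
    (hp : Tendsto (fun n : ℕ => dist (a • p n) (p n)) atTop
      (nhds (⨅ y : X, dist (a • y) y)))
    (g : ℕ → G) (hg : ∀ n : ℕ, g n • p n = p₀) :
    ∃ φ : ℕ → ℕ, StrictMono φ ∧ ∃ abar : X → X, Isometry abar ∧
      (∀ x : X, Tendsto (fun n : ℕ => (g (φ n) * a * (g (φ n))⁻¹) • x) atTop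
        (nhds (abar x))) ∧
      dist (abar p₀) p₀ = (⨅ y : X, dist (abar y) y) ∧
      (⨅ y : X, dist (abar y) y) = ⨅ y : X, dist (a • y) y := by
  classical
  have : Nonempty X := ⟨p₀⟩
  set D : ℝ := ⨅ y : X, dist (a • y) y with hD
  set F : ℕ → X → X := fun n x => (g n * a * (g n)⁻¹) • x with hF
  have hFiso : ∀ n, Isometry (F n) := fun n => hiso _
  have hbdd : BddBelow (Set.range fun y : X => dist (a • y) y) :=
    ⟨0, by rintro _ ⟨y, rfl⟩; exact dist_nonneg⟩
  -- `(g n)⁻¹ • p₀ = p n`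
  have hinv : ∀ n, (g n)⁻¹ • p₀ = p n := fun n => by
    rw [← hg n, inv_smul_smul]
  -- displacement of `F n` at `p₀`
  have hFp₀ : ∀ n, dist (F n p₀) p₀ = dist (a • p n) (p n) := by
    intro n
    have : F n p₀ = g n • (a • p n) := by
      simp only [hF, mul_smul, hinv n]
    rw [this, ← hg n, (hiso (g n)).dist_eq]
  -- lower bound: every displacement of `F n` is ≥ D
  have hDle : ∀ n (y : X), D ≤ dist (F n y) y := by
    intro n y
    have h1 : F n y = g n • (a • ((g n)⁻¹ • y)) := by
      simp only [hF, mul_smul]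
    have h2 : y = g n • ((g n)⁻¹ • y) := (smul_inv_smul _ _).symm
    calc D ≤ dist (a • ((g n)⁻¹ • y)) ((g n)⁻¹ • y) := ciInf_le hbdd _
    _ = dist (g n • (a • ((g n)⁻¹ • y))) (g n • ((g n)⁻¹ • y)) :=
        ((hiso (g n)).dist_eq _ _).symm
    _ = dist (F n y) y := by rw [h1, smul_inv_smul]
  -- uniform bound on displacement at `p₀`
  obtain ⟨C, hC⟩ : BddAbove (Set.range fun n => dist (a • p n) (p n)) := hp.bddAbove_range
  have hCb : ∀ n, dist (F n p₀) p₀ ≤ C := fun n => by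
    rw [hFp₀]; exact hC ⟨n, rfl⟩
  -- dense sequence
  set u : ℕ → X := denseSeq X with hu
  have hud : DenseRange u := denseRange_denseSeq X
  -- the sequence of tuples lives in a compact set
  set s : Set (ℕ → X) := Set.pi Set.univ fun k => closedBall p₀ (dist (u k) p₀ + C) with hs
  have hscomp : IsCompact s := isCompact_univ_pi fun k => isCompact_closedBall _ _
  have hmem : ∀ n, (fun k => F n (u k)) ∈ s := by
    intro n k _
    have : dist (F n (u k)) p₀ ≤ dist (F n (u k)) (F n p₀) + dist (F n p₀) p₀ :=
      dist_triangle _ _ _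
    rw [(hFiso n).dist_eq] at this
    exact mem_closedBall.2 (this.trans (by linarith [hCb n]))
  obtain ⟨f, -, φ, hφ, hconv⟩ := hscomp.tendsto_subseq hmem
  have hconv' : ∀ k, Tendsto (fun n => F (φ n) (u k)) atTop (nhds (f k)) := by
    intro k
    exact (tendsto_pi_nhds.1 hconv) k
  -- Cauchy for every x
  have hcauchy : ∀ x : X, CauchySeq fun n => F (φ n) x := by
    intro x
    rw [Metric.cauchySeq_iff]
    intro ε hε
    obtain ⟨k, hk⟩ := Metric.denseRange_iff.1 hud x (ε / 4) (by linarith)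
    obtain ⟨N, hN⟩ := Metric.cauchySeq_iff.1 (hconv' k).cauchySeq (ε / 2) (by linarith)
    refine ⟨N, fun m hm n hn => ?_⟩
    have h1 : dist (F (φ m) x) (F (φ m) (u k)) = dist x (u k) := (hFiso _).dist_eq _ _
    have h2 : dist (F (φ n) (u k)) (F (φ n) x) = dist (u k) x := (hFiso _).dist_eq _ _
    have h3 := hN m hm n hn
    calc dist (F (φ m) x) (F (φ n) x)
        ≤ dist (F (φ m) x) (F (φ m) (u k)) + dist (F (φ m) (u k)) (F (φ n) (u k)) +
            dist (F (φ n) (u k)) (F (φ n) x) := dist_triangle4 _ _ _ _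
      _ < ε := by rw [h1, h2, dist_comm (u k) x]; linarith
  have key : ∀ x : X, ∃ l : X, Tendsto (fun n => F (φ n) x) atTop (nhds l) := fun x =>
    cauchySeq_tendsto_of_complete (hcauchy x)
  choose abar habar using key
  refine ⟨φ, hφ, abar, ?_, habar, ?_, ?_⟩
  · refine Isometry.of_dist_eq fun x y => ?_
    have h1 : Tendsto (fun n => dist (F (φ n) x) (F (φ n) y)) atTop
        (nhds (dist (abar x) (abar y))) := (habar x).dist (habar y)
    have h2 : (fun n => dist (F (φ n) x) (F (φ n) y)) = fun _ => dist x y := by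
      funext n; exact (hFiso _).dist_eq _ _
    rw [h2] at h1
    exact tendsto_nhds_unique h1 tendsto_const_nhds
  all_goals {
    have hdp₀ : dist (abar p₀) p₀ = D := by
      have h1 : Tendsto (fun n => dist (F (φ n) p₀) p₀) atTop
          (nhds (dist (abar p₀) p₀)) := (habar p₀).dist tendsto_const_nhds
      have h2 : Tendsto (fun n => dist (F (φ n) p₀) p₀) atTop (nhds D) := by
        simp only [hFp₀]
        exact hp.comp hφ.tendsto_atTop
      exact tendsto_nhds_unique h1 h2
    have hge : ∀ y : X, D ≤ dist (abar y) y :=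
      fun y => ge_of_tendsto ((habar y).dist tendsto_const_nhds)
        (Eventually.of_forall fun n => hDle (φ n) y)
    have hinf : (⨅ y : X, dist (abar y) y) = D := by
      refine le_antisymm ?_ (le_ciInf hge)
      calc (⨅ y : X, dist (abar y) y) ≤ dist (abar p₀) p₀ :=
            ciInf_le ⟨0, by rintro _ ⟨y, rfl⟩; exact dist_nonneg⟩ p₀
        _ = D := hdp₀
    first
    | exact hdp₀.trans hinf.symm
    | exact hinf
  }
end
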